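/- arXiv:2602.22985 — 2 statements merged into one kernel-verified Lean document; each statement's English description precedes it below -/
import Mathlib

section
/- Under Assumption A, if D(Y,X) = 1, then for P_X-almost every x ∈ 𝒳 the conditional distribution P_{Y|X=x} is degenerate (i.e., a Dirac measure). The key step: if with positive P_X-probability there exist distinct points y₁ ≠ y₂ supported by P_{Y|X=x} with k(y₁, y) = c_x(y) = k(y₂, y) for P_Y-a.e. y, then by continuity of k and full support of P_Y we get k(y₁, ·) = k(y₂, ·) on all of 𝒴, contradicting injectivity of y ↦ k(·, y). -/
open MeasureTheory ProbabilityTheory Set Function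
open scoped ENNReal

/-!
By the law of total variance, `∫ Var_{P_{Y|X=x}}[k(·,y)] dP_X(x) ≤ Var_{P_Y}[k(·,y)]` for every
`y`, so the normalized conditional variance has double integral at most `1`; in particular the
Bochner integral in `D(Y,X)` is not a junk value, and its vanishing forces
`Var_{P_{Y|X=x}}[k(·,y)] = 0` for `P_X`-a.e. `x` and `P_Y`-a.e. `y`. Then `k(u,y)` equals the
mean embedding `∫ k(·,y) dP_{Y|X=x}` for every `u` in the support of `P_{Y|X=x}`; fixing such
a `u₀`, continuity and full support of `P_Y` upgrade this to all `y`, and since `k` is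
characteristic, `P_{Y|X=x} = δ_{u₀}`.
-/

lemma abs_sq_le_sq_of_abs_le {a C : ℝ} (h : |a| ≤ C) : |a ^ 2| ≤ C ^ 2 := by
  rw [abs_pow]; exact pow_le_pow_left₀ (abs_nonneg a) h 2

section BoundedFunction

variable {α : Type*} [MeasurableSpace α] {P : Measure α} {f : α → ℝ} {C : ℝ}

lemma memLp_of_abs_le [IsFiniteMeasure P] (hf : AEStronglyMeasurable f P)
    (hC : ∀ a, |f a| ≤ C) (p : ℝ≥0∞) : MemLp f p P :=
  MemLp.of_bound hf C (ae_of_all _ fun a => (Real.norm_eq_abs _).trans_le (hC a))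

lemma integrable_of_abs_le [IsFiniteMeasure P] (hf : AEStronglyMeasurable f P)
    (hC : ∀ a, |f a| ≤ C) : Integrable f P :=
  memLp_one_iff_integrable.mp (memLp_of_abs_le hf hC 1)

lemma abs_integral_le_of_abs_le [IsProbabilityMeasure P] (hC : ∀ a, |f a| ≤ C) :
    |∫ a, f a ∂P| ≤ C := by
  simpa using norm_integral_le_of_norm_le_const (μ := P)
    (ae_of_all _ fun a => (Real.norm_eq_abs _).trans_le (hC a))

lemma sq_integral_le_integral_sq [IsProbabilityMeasure P] (hf : MemLp f 2 P) :
    (∫ a, f a ∂P) ^ 2 ≤ ∫ a, f a ^ 2 ∂P := by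
  have h := variance_nonneg f P
  rw [variance_eq_sub hf] at h
  simpa [sub_nonneg] using h

end BoundedFunction

lemma Continuous.eqOn_support_of_ae_eq {β E : Type*} [TopologicalSpace β] [MeasurableSpace β]
    [TopologicalSpace E] [T2Space E] {P : Measure β} {f : β → E} (hf : Continuous f) {c : E}
    (h : ∀ᵐ u ∂P, f u = c) :
    EqOn f (fun _ => c) P.support := by
  intro u hu
  by_contra hne
  have hopen : IsOpen {v | f v ≠ c} := isOpen_ne_fun hf continuous_const
  exact ((Measure.mem_support_iff_forall u).mp hu _ (hopen.mem_nhds hne)).ne' (ae_iff.mp h)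

lemma variance_pos_of_continuous {β : Type*} [TopologicalSpace β] [MeasurableSpace β]
    {P : Measure β} [IsProbabilityMeasure P] [P.IsOpenPosMeasure] {f : β → ℝ}
    (hf : Continuous f) (hmem : MemLp f 2 P) (hnc : ∃ u v, f u ≠ f v) :
    0 < variance f P := by
  refine (variance_nonneg f P).lt_of_ne' fun h0 => ?_
  obtain ⟨u, v, huv⟩ := hnc
  have hconst := hf.eqOn_support_of_ae_eq (ae_eq_integral_of_variance_eq_zero hmem h0)
  rw [Measure.support_eq_univ] at hconst
  exact huv ((hconst (mem_univ u)).trans (hconst (mem_univ v)).symm)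

section TotalVariance

variable {α β : Type*} [MeasurableSpace α] [MeasurableSpace β]

theorem MeasureTheory.Measure.integral_comp {E : Type*} [NormedAddCommGroup E]
    [NormedSpace ℝ E] {ρ : Measure α} [SFinite ρ] {κ : Kernel α β} [IsSFiniteKernel κ] {g : β → E}
    (hg : Integrable g (κ ∘ₘ ρ)) : ∫ u, g u ∂(κ ∘ₘ ρ) = ∫ x, ∫ u, g u ∂κ x ∂ρ := by
  rw [← Measure.snd_compProd, Measure.snd, integral_map measurable_snd.aemeasurable]
  · exact Measure.integral_compProd ((Measure.integrable_compProd_snd_iff hg.1).mpr hg)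
  · rw [← Measure.snd, Measure.snd_compProd]; exact hg.1

variable {ρ : Measure α} [IsProbabilityMeasure ρ] {κ : Kernel α β} [IsMarkovKernel κ]
  {f : β → ℝ} {C : ℝ}

lemma integrable_integral_kernel_of_abs_le (hf : Measurable f) (hC : ∀ u, |f u| ≤ C) :
    Integrable (fun x => ∫ u, f u ∂κ x) ρ :=
  integrable_of_abs_le hf.stronglyMeasurable.integral_kernel.aestronglyMeasurable
    fun _ => abs_integral_le_of_abs_le hC

lemma integral_integral_kernel_of_abs_le (hf : Measurable f) (hC : ∀ u, |f u| ≤ C) :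
    ∫ x, ∫ u, f u ∂κ x ∂ρ = ∫ u, f u ∂(κ ∘ₘ ρ) :=
  (Measure.integral_comp (integrable_of_abs_le hf.aestronglyMeasurable hC)).symm

lemma integrable_sq_integral_kernel_of_abs_le (hf : Measurable f) (hC : ∀ u, |f u| ≤ C) :
    Integrable (fun x => (∫ u, f u ∂κ x) ^ 2) ρ :=
  integrable_of_abs_le (hf.stronglyMeasurable.integral_kernel.aestronglyMeasurable.pow 2)
    fun _ => abs_sq_le_sq_of_abs_le (abs_integral_le_of_abs_le hC)

lemma variance_eq_integral_sq_sub_sq {P : Measure β} [IsProbabilityMeasure P]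
    (hf : Measurable f) (hC : ∀ u, |f u| ≤ C) :
    variance f P = ∫ u, f u ^ 2 ∂P - (∫ u, f u ∂P) ^ 2 :=
  variance_eq_sub (memLp_of_abs_le hf.aestronglyMeasurable hC 2)

lemma integrable_variance_kernel (hf : Measurable f) (hC : ∀ u, |f u| ≤ C) :
    Integrable (fun x => variance f (κ x)) ρ := by
  simp_rw [variance_eq_integral_sq_sub_sq hf hC]
  refine (integrable_integral_kernel_of_abs_le (hf.pow_const 2)
    fun u => abs_sq_le_sq_of_abs_le (hC u)).sub (integrable_sq_integral_kernel_of_abs_le hf hC)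

theorem integral_variance_kernel_le_variance_comp (hf : Measurable f) (hC : ∀ u, |f u| ≤ C) :
    ∫ x, variance f (κ x) ∂ρ ≤ variance f (κ ∘ₘ ρ) := by
  have hsq : ∀ u, |f u ^ 2| ≤ C ^ 2 := fun u => abs_sq_le_sq_of_abs_le (hC u)
  have hmean := integrable_integral_kernel_of_abs_le (ρ := ρ) (κ := κ) hf hC
  have jensen : (∫ x, ∫ u, f u ∂κ x ∂ρ) ^ 2 ≤ ∫ x, (∫ u, f u ∂κ x) ^ 2 ∂ρ :=
    sq_integral_le_integral_sq (memLp_of_abs_le hmean.1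
      (fun _ => abs_integral_le_of_abs_le hC) 2)
  simp_rw [variance_eq_integral_sq_sub_sq hf hC]
  rw [integral_sub (integrable_integral_kernel_of_abs_le (hf.pow_const 2) hsq)
      (integrable_sq_integral_kernel_of_abs_le hf hC),
    integral_integral_kernel_of_abs_le (hf.pow_const 2) hsq,
    ← integral_integral_kernel_of_abs_le hf hC]
  linarith

end TotalVariance

section KernelFunction

variable {α β γ : Type*} [MeasurableSpace α] [MeasurableSpace β] [TopologicalSpace β]
  [OpensMeasurableSpace β] [TopologicalSpace γ] {k : β → γ → ℝ} {C : ℝ}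

lemma continuous_integral_of_abs_le [FirstCountableTopology γ] (P : Measure β)
    [IsFiniteMeasure P] (hk : Continuous (uncurry k)) (hC : ∀ u y, |k u y| ≤ C) :
    Continuous fun y => ∫ u, k u y ∂P :=
  continuous_of_dominated (bound := fun _ => C)
    (fun y => (hk.uncurry_right y).aestronglyMeasurable)
    (fun y => ae_of_all _ fun u => (Real.norm_eq_abs _).trans_le (hC u y))
    (integrable_const C)
    (ae_of_all _ fun u => hk.uncurry_left u)

lemma continuous_variance_of_abs_le [FirstCountableTopology γ] (P : Measure β)
    [IsProbabilityMeasure P] (hk : Continuous (uncurry k)) (hC : ∀ u y, |k u y| ≤ C) :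
    Continuous fun y => variance (fun u => k u y) P := by
  have hsec (y : γ) : Measurable fun u => k u y := (hk.uncurry_right y).measurable
  simp_rw [fun y => variance_eq_integral_sq_sub_sq (P := P) (hsec y) (hC · y)]
  exact (continuous_integral_of_abs_le P (hk.pow 2)
    fun u y => abs_sq_le_sq_of_abs_le (hC u y)).sub ((continuous_integral_of_abs_le P hk hC).pow 2)

variable [MeasurableSpace γ] [TopologicalSpace.MetrizableSpace γ] [SecondCountableTopology γ]
  [OpensMeasurableSpace γ]

lemma measurable_integral_kernel_of_abs_le (κ : Kernel α β) [IsFiniteKernel κ]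
    (hk : Continuous (uncurry k)) (hC : ∀ u y, |k u y| ≤ C) :
    Measurable fun p : α × γ => ∫ u, k u p.2 ∂κ p.1 := by
  have h_meas (y : γ) : Measurable fun x => ∫ u, k u y ∂κ x :=
    (hk.uncurry_right y).measurable.stronglyMeasurable.integral_kernel.measurable
  have h_cont (x : α) : Continuous fun y => ∫ u, k u y ∂κ x :=
    continuous_integral_of_abs_le (κ x) hk hC
  exact (measurable_uncurry_of_continuous_of_measurable h_cont h_meas).comp measurable_swap

lemma measurable_variance_kernel_div (κ : Kernel α β) [IsMarkovKernel κ] (P : Measure β)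
    [IsProbabilityMeasure P] (hk : Continuous (uncurry k)) (hC : ∀ u y, |k u y| ≤ C) :
    Measurable fun p : α × γ =>
      variance (fun u => k u p.2) (κ p.1) / variance (fun u => k u p.2) P := by
  have hsec (y : γ) : Measurable fun u => k u y := (hk.uncurry_right y).measurable
  have hnum : Measurable fun p : α × γ => variance (fun u => k u p.2) (κ p.1) := by
    simp_rw [fun p : α × γ =>
      variance_eq_integral_sq_sub_sq (P := κ p.1) (hsec p.2) (hC · p.2)]
    exact (measurable_integral_kernel_of_abs_le κ (hk.pow 2)
      fun u y => abs_sq_le_sq_of_abs_le (hC u y)).sub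
      ((measurable_integral_kernel_of_abs_le κ hk hC).pow_const 2)
  exact hnum.div ((continuous_variance_of_abs_le P hk hC).measurable.comp measurable_snd)

lemma lintegral_lintegral_variance_div_le_one {ρ : Measure α} [IsProbabilityMeasure ρ]
    (κ : Kernel α β) [IsMarkovKernel κ] (ν : Measure γ) [IsProbabilityMeasure ν]
    (hk : Continuous (uncurry k)) (hC : ∀ u y, |k u y| ≤ C)
    (hpos : ∀ y, 0 < variance (fun u => k u y) (κ ∘ₘ ρ)) :
    ∫⁻ x, ∫⁻ y, ENNReal.ofReal (variance (fun u => k u y) (κ x)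
      / variance (fun u => k u y) (κ ∘ₘ ρ)) ∂ν ∂ρ ≤ 1 := by
  have hsec (y : γ) : Measurable fun u => k u y := (hk.uncurry_right y).measurable
  rw [lintegral_lintegral_swap
    (measurable_variance_kernel_div κ (κ ∘ₘ ρ) hk hC).ennreal_ofReal.aemeasurable]
  calc ∫⁻ y, ∫⁻ x, ENNReal.ofReal (variance (fun u => k u y) (κ x)
        / variance (fun u => k u y) (κ ∘ₘ ρ)) ∂ρ ∂ν
      ≤ ∫⁻ _, 1 ∂ν := lintegral_mono fun y => by
        rw [← ofReal_integral_eq_lintegral_ofReal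
          ((integrable_variance_kernel (hsec y) (hC · y)).div_const _)
          (ae_of_all _ fun x => div_nonneg (variance_nonneg _ _) (variance_nonneg _ _)),
          integral_div]
        exact ENNReal.ofReal_le_one.mpr ((div_le_one (hpos y)).mpr
          (integral_variance_kernel_le_variance_comp (hsec y) (hC · y)))
    _ = 1 := by simp

end KernelFunction

lemma ae_ae_eq_zero_of_integral_integral_eq_zero {α γ : Type*} [MeasurableSpace α]
    [MeasurableSpace γ] {ρ : Measure α} {ν : Measure γ} [SFinite ν] {F : α → γ → ℝ}
    (hF : Measurable (uncurry F)) (hF_nonneg : ∀ x y, 0 ≤ F x y)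
    (hF_fin : ∫⁻ x, ∫⁻ y, ENNReal.ofReal (F x y) ∂ν ∂ρ ≠ ∞)
    (h : ∫ x, ∫ y, F x y ∂ν ∂ρ = 0) : ∀ᵐ x ∂ρ, ∀ᵐ y ∂ν, F x y = 0 := by
  set L : α → ℝ≥0∞ := fun x => ∫⁻ y, ENNReal.ofReal (F x y) ∂ν
  have hL : Measurable L := hF.ennreal_ofReal.lintegral_prod_right'
  have hinner (x : α) : ∫ y, F x y ∂ν = (L x).toReal :=
    integral_eq_lintegral_of_nonneg_ae (ae_of_all _ (hF_nonneg x))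
      (hF.comp measurable_prodMk_left).aestronglyMeasurable
  simp_rw [hinner] at h
  have hL_zero : ∀ᵐ x ∂ρ, (L x).toReal = 0 :=
    (integral_eq_zero_iff_of_nonneg (fun _ => ENNReal.toReal_nonneg)
      (integrable_toReal_of_lintegral_ne_top hL.aemeasurable hF_fin)).mp h
  filter_upwards [hL_zero, ae_lt_top hL hF_fin] with x hx hx_fin
  have hLx : L x = 0 := (ENNReal.toReal_eq_zero_iff _).mp hx |>.resolve_right hx_fin.ne
  have hFx : Measurable fun y => ENNReal.ofReal (F x y) :=
    (hF.comp measurable_prodMk_left).ennreal_ofReal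
  filter_upwards [(lintegral_eq_zero_iff hFx).mp hLx] with y hy
  exact le_antisymm (ENNReal.ofReal_eq_zero.mp hy) (hF_nonneg x y)

def IsCharacteristic {β γ : Type*} [MeasurableSpace β] (k : β → γ → ℝ) : Prop :=
  ∀ P Q : Measure β, IsProbabilityMeasure P → IsProbabilityMeasure Q →
    (∀ y, ∫ u, k u y ∂P = ∫ u, k u y ∂Q) → P = Q

lemma IsCharacteristic.eq_dirac_of_ae_variance_eq_zero {β γ : Type*} [MeasurableSpace β]
    [TopologicalSpace β] [OpensMeasurableSpace β] [HereditarilyLindelofSpace β]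
    [MeasurableSpace γ] [TopologicalSpace γ] [FirstCountableTopology γ]
    {k : β → γ → ℝ} (hk_char : IsCharacteristic k) (hk : Continuous (uncurry k))
    {C : ℝ} (hC : ∀ u y, |k u y| ≤ C) (P : Measure β) [IsProbabilityMeasure P]
    (ν : Measure γ) [ν.IsOpenPosMeasure]
    (h : ∀ᵐ y ∂ν, variance (fun u => k u y) P = 0) : ∃ u₀, P = Measure.dirac u₀ := by
  have hsec (y : γ) : Continuous fun u => k u y := hk.uncurry_right y
  obtain ⟨u₀, hu₀⟩ := P.nonempty_support (IsProbabilityMeasure.ne_zero P)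
  have hae : (fun y => k u₀ y) =ᵐ[ν] fun y => ∫ u, k u y ∂P := by
    filter_upwards [h] with y hy
    exact (hsec y).eqOn_support_of_ae_eq (ae_eq_integral_of_variance_eq_zero
      (memLp_of_abs_le (hsec y).aestronglyMeasurable (hC · y) 2) hy) hu₀
  have hmean := (Continuous.ae_eq_iff_eq ν (hk.uncurry_left u₀)
    (continuous_integral_of_abs_le P hk hC)).mp hae
  refine ⟨u₀, hk_char _ _ inferInstance inferInstance fun y => ?_⟩
  rw [integral_dirac' _ _ (hsec y).stronglyMeasurable]
  exact (congrFun hmean y).symm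

theorem condDistrib_ae_dirac_of_kernel_integrated_R2_eq_one_general
    {Ω : Type*} [MeasurableSpace Ω]
    {𝒳 : Type*} [MeasurableSpace 𝒳]
    {𝒴 : Type*} [TopologicalSpace 𝒴] [PolishSpace 𝒴] [MeasurableSpace 𝒴] [BorelSpace 𝒴]
    [Nonempty 𝒴]
    (μ : Measure Ω) [IsProbabilityMeasure μ]
    (X : Ω → 𝒳) (hX : Measurable X)
    (Y : Ω → 𝒴) (hY : Measurable Y)
    (hsupp : ∀ U : Set 𝒴, IsOpen U → U.Nonempty → 0 < (μ.map Y) U)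
    (k : 𝒴 → 𝒴 → ℝ)
    (hk_cont : Continuous fun p : 𝒴 × 𝒴 => k p.1 p.2)
    (hk_bdd : ∃ C : ℝ, ∀ u v : 𝒴, |k u v| ≤ C)
    (hk_char : ∀ (P Q : Measure 𝒴), IsProbabilityMeasure P → IsProbabilityMeasure Q →
      (∀ y : 𝒴, ∫ u, k u y ∂P = ∫ u, k u y ∂Q) → P = Q)
    (hk_nonconst : ∀ y : 𝒴, ∃ u v : 𝒴, k u y ≠ k v y)
    (hD : ∫ x, ∫ y, variance (fun u => k u y) (condDistrib Y X μ x)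
            / variance (fun u => k u y) (μ.map Y) ∂(μ.map Y) ∂(μ.map X) = 0) :
    ∀ᵐ x ∂(μ.map X), ∃ y₀ : 𝒴, condDistrib Y X μ x = Measure.dirac y₀ := by
  obtain ⟨C, hC⟩ := hk_bdd
  have hk : Continuous (uncurry k) := hk_cont
  have hcomp : condDistrib Y X μ ∘ₘ μ.map X = μ.map Y :=
    condDistrib_comp_map hX.aemeasurable hY.aemeasurable
  have : IsProbabilityMeasure (μ.map Y) := Measure.isProbabilityMeasure_map hY.aemeasurable
  have : IsProbabilityMeasure (μ.map X) := Measure.isProbabilityMeasure_map hX.aemeasurable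
  have : (μ.map Y).IsOpenPosMeasure := ⟨fun U hU hne => (hsupp U hU hne).ne'⟩
  have hpos (y : 𝒴) : 0 < variance (fun u => k u y) (μ.map Y) :=
    variance_pos_of_continuous (hk.uncurry_right y)
      (memLp_of_abs_le (hk.uncurry_right y).aestronglyMeasurable (hC · y) 2) (hk_nonconst y)
  have hfin := lintegral_lintegral_variance_div_le_one (ρ := μ.map X) (condDistrib Y X μ)
    (μ.map Y) hk hC (hcomp ▸ hpos)
  rw [hcomp] at hfin
  have hzero := ae_ae_eq_zero_of_integral_integral_eq_zero
    (measurable_variance_kernel_div (condDistrib Y X μ) (μ.map Y) hk hC)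
    (fun _ _ => div_nonneg (variance_nonneg _ _) (variance_nonneg _ _))
    (hfin.trans_lt ENNReal.one_lt_top).ne hD
  filter_upwards [hzero] with x hx
  exact IsCharacteristic.eq_dirac_of_ae_variance_eq_zero hk_char hk hC _ (μ.map Y)
    (hx.mono fun y hy => (div_eq_zero_iff.mp hy).resolve_right (hpos y).ne')

/-- Under Assumption A, if `D(Y,X) = 1` (equivalently the integrated normalized
conditional variance vanishes), then for `P_X`-a.e. `x` the conditional
distribution `P_{Y|X=x}` is degenerate, i.e. a Dirac measure. -/
theorem condDistrib_ae_dirac_of_kernel_integrated_R2_eq_one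
    {Ω : Type*} [MeasurableSpace Ω]
    {𝒳 : Type*} [TopologicalSpace 𝒳] [MeasurableSpace 𝒳] [BorelSpace 𝒳]
    {𝒴 : Type*} [TopologicalSpace 𝒴] [PolishSpace 𝒴] [MeasurableSpace 𝒴] [BorelSpace 𝒴]
    [Nonempty 𝒴]
    (μ : Measure Ω) [IsProbabilityMeasure μ]
    (X : Ω → 𝒳) (hX : Measurable X)
    (Y : Ω → 𝒴) (hY : Measurable Y)
    (hsupp : ∀ U : Set 𝒴, IsOpen U → U.Nonempty → 0 < (μ.map Y) U)
    (hnondeg : ¬ ∃ y : 𝒴, μ.map Y = Measure.dirac y)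
    (k : 𝒴 → 𝒴 → ℝ)
    (hk_cont : Continuous fun p : 𝒴 × 𝒴 => k p.1 p.2)
    (hk_bdd : ∃ C : ℝ, ∀ u v : 𝒴, |k u v| ≤ C)
    (hk_char : ∀ (P Q : Measure 𝒴), IsProbabilityMeasure P → IsProbabilityMeasure Q →
      (∀ y : 𝒴, ∫ u, k u y ∂P = ∫ u, k u y ∂Q) → P = Q)
    (hk_nonconst : ∀ y : 𝒴, ∃ u v : 𝒴, k u y ≠ k v y)
    (hD : ∫ x, ∫ y, variance (fun u => k u y) (condDistrib Y X μ x)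
            / variance (fun u => k u y) (μ.map Y) ∂(μ.map Y) ∂(μ.map X) = 0) :
    ∀ᵐ x ∂(μ.map X), ∃ y₀ : 𝒴, condDistrib Y X μ x = Measure.dirac y₀ :=
  condDistrib_ae_dirac_of_kernel_integrated_R2_eq_one_general μ X hX Y hY hsupp k hk_cont hk_bdd
    hk_char hk_nonconst hD
end

section
/- Bounded differences (McDiarmid) inequality: let X₁, …, X_n be independent random variables in a measurable space 𝒳, and let f : 𝒳ⁿ → ℝ satisfy the bounded difference property with constants c₁, …, c_n, i.e., changing the i-th coordinate changes f by at most c_i. Then with Z = f(X₁,…,X_n) and ν = (1/4)∑ᵢ cᵢ², for all t > 0: P(Z − E[Z] > t) ≤ exp(−t²/(2ν)). -/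
/-!
Tensorization of Hoeffding's lemma. Under a product measure, split off the first coordinate:
`f - 𝔼 f = (g - 𝔼 g) + (f - g)`, where `g` integrates `f` over the remaining coordinates. The
function `g` of one variable oscillates by at most `c₀`, so Hoeffding's lemma makes `g - 𝔼 g`
sub-Gaussian with parameter `(c₀/2)²`; for each fixed first coordinate, `f - g` is sub-Gaussian with
parameter `∑_{i>0} (cᵢ/2)²` by induction. Integrating out the second summand first shows that the
parameters add; the Chernoff bound for the parameter `∑ (cᵢ/2)² = ν` gives the tail estimate.
-/

open MeasureTheory ProbabilityTheory Real

open scoped NNReal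

def HasBoundedDifferences {ι α : Type*} [DecidableEq ι] (f : (ι → α) → ℝ) (c : ι → ℝ) : Prop :=
  ∀ i x x', |f x - f (Function.update x i x')| ≤ c i

lemma exists_forall_mem_Icc_of_abs_sub_le {α : Type*} {g : α → ℝ} {c : ℝ}
    (hg : ∀ x y, |g x - g y| ≤ c) : ∃ a, ∀ x, g x ∈ Set.Icc a (a + c) := by
  have hlower : ∀ x y, g x - c ≤ g y := fun x y => by linarith [(abs_le.1 (hg x y)).2]
  refine ⟨sInf (Set.range g), fun x => ⟨?_, ?_⟩⟩
  · exact csInf_le ⟨g x - c, by rintro _ ⟨y, rfl⟩; exact hlower x y⟩ (Set.mem_range_self x)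
  · have := le_csInf (Set.range_nonempty_iff_nonempty.2 ⟨x⟩)
      (by rintro _ ⟨y, rfl⟩; exact hlower x y)
    linarith

namespace HasBoundedDifferences

variable {ι α : Type*} [DecidableEq ι] {f : (ι → α) → ℝ} {c : ι → ℝ}

lemma abs_sub_le_sum [Fintype ι] (hf : HasBoundedDifferences f c) (x y : ι → α) :
    |f x - f y| ≤ ∑ i, c i := by
  suffices ∀ s : Finset ι, ∀ x, (∀ i ∉ s, x i = y i) → |f x - f y| ≤ ∑ i ∈ s, c i from
    this Finset.univ x (by simp)
  intro s
  induction s using Finset.induction_on with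
  | empty => intro x hx; simp [funext fun i => hx i (Finset.notMem_empty i)]
  | @insert i s hi ih =>
    intro x hx
    have hx' : ∀ j ∉ s, Function.update x i (y i) j = y j := by
      intro j hj
      rcases eq_or_ne j i with rfl | hji
      · simp
      · simpa [hji] using hx j (by simp [hji, hj])
    calc |f x - f y|
        ≤ |f x - f (Function.update x i (y i))| + |f (Function.update x i (y i)) - f y| :=
          abs_sub_le _ _ _
      _ ≤ c i + ∑ j ∈ s, c j := add_le_add (hf i x (y i)) (ih _ hx')
      _ = ∑ j ∈ insert i s, c j := (Finset.sum_insert hi).symm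

lemma exists_forall_mem_Icc [Fintype ι] (hf : HasBoundedDifferences f c) :
    ∃ a, ∀ x, f x ∈ Set.Icc a (a + ∑ i, c i) :=
  exists_forall_mem_Icc_of_abs_sub_le hf.abs_sub_le_sum

end HasBoundedDifferences

lemma ProbabilityTheory.HasSubgaussianMGF.add_prod {α β : Type*} [MeasurableSpace α]
    [MeasurableSpace β] {μ : Measure α} {ν : Measure β} [SFinite μ] [SFinite ν] {X : α → ℝ}
    {Y : α × β → ℝ} {cX cY : ℝ≥0} (hX : HasSubgaussianMGF X cX μ)
    (hY : ∀ a, HasSubgaussianMGF (fun b => Y (a, b)) cY ν)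
    (hXY : ∀ t, Integrable (fun p => exp (t * (X p.1 + Y p))) (μ.prod ν)) :
    HasSubgaussianMGF (fun p => X p.1 + Y p) (cX + cY) (μ.prod ν) where
  integrable_exp_mul := hXY
  mgf_le t := by
    have hprod := hXY t
    simp_rw [mul_add, exp_add] at hprod
    calc mgf (fun p => X p.1 + Y p) (μ.prod ν) t
        = ∫ a, exp (t * X a) * mgf (fun b => Y (a, b)) ν t ∂μ := by
          simp_rw [mgf, mul_add, exp_add]
          rw [integral_prod _ hprod]
          simp_rw [integral_const_mul]
      _ ≤ ∫ a, exp (t * X a) * exp (cY * t ^ 2 / 2) ∂μ := by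
          refine integral_mono_of_nonneg
            (ae_of_all _ fun a => mul_nonneg (exp_pos _).le mgf_nonneg)
            ((hX.integrable_exp_mul t).mul_const _) (ae_of_all _ fun a => ?_)
          exact mul_le_mul_of_nonneg_left ((hY a).mgf_le t) (exp_pos _).le
      _ = mgf X μ t * exp (cY * t ^ 2 / 2) := integral_mul_const _ _
      _ ≤ exp (cX * t ^ 2 / 2) * exp (cY * t ^ 2 / 2) := by gcongr; exact hX.mgf_le t
      _ = exp (↑(cX + cY) * t ^ 2 / 2) := by rw [← exp_add]; push_cast; ring_nf

theorem ProbabilityTheory.hasSubgaussianMGF_pi_of_hasBoundedDifferences {𝒳 : Type*}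
    [MeasurableSpace 𝒳] {n : ℕ} (ν : Fin n → Measure 𝒳) [∀ i, IsProbabilityMeasure (ν i)]
    {f : (Fin n → 𝒳) → ℝ} (hf : Measurable f) {c : Fin n → ℝ}
    (hbdd : HasBoundedDifferences f c) :
    HasSubgaussianMGF (fun x => f x - ∫ y, f y ∂Measure.pi ν) (∑ i, (‖c i‖₊ / 2) ^ 2)
      (Measure.pi ν) := by
  induction n with
  | zero =>
    have hconst (x : Fin 0 → 𝒳) : ∫ y, f y ∂Measure.pi ν = f x := by
      simp [Subsingleton.elim _ x]
    have hzero : (fun x => f x - ∫ y, f y ∂Measure.pi ν) = fun _ => 0 :=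
      funext fun x => by rw [hconst x, sub_self]
    simp [hzero]
  | succ n ih =>
    set ν' := fun j => ν (Fin.succAbove 0 j)
    set e := MeasurableEquiv.piFinSuccAbove (fun _ => 𝒳) 0
    have he : MeasurePreserving e (Measure.pi ν) ((ν 0).prod (Measure.pi ν')) :=
      measurePreserving_piFinSuccAbove ν 0
    set F : 𝒳 × (Fin n → 𝒳) → ℝ := fun p => f (Fin.insertNth 0 p.1 p.2)
    have hF : Measurable F := hf.comp e.symm.measurable
    set g : 𝒳 → ℝ := fun a => ∫ y, F (a, y) ∂Measure.pi ν'
    obtain ⟨m, hm⟩ := hbdd.exists_forall_mem_Icc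
    have hF_slice (a : 𝒳) : Integrable (fun y => F (a, y)) (Measure.pi ν') :=
      .of_mem_Icc _ _ (hF.comp measurable_prodMk_left).aemeasurable (ae_of_all _ fun y => hm _)
    have hFe (x : Fin (n + 1) → 𝒳) : F (e x) = f x := congrArg f (e.symm_apply_apply x)
    have hmean : ∫ x, f x ∂Measure.pi ν = ∫ a, g a ∂ν 0 := by
      simp_rw [← hFe]
      exact (he.integral_comp' F).trans
        (integral_prod F (.of_mem_Icc _ _ hF.aemeasurable (ae_of_all _ fun p => hm _)))
    have hg_osc (a a' : 𝒳) : |g a - g a'| ≤ c 0 := by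
      rw [← integral_sub (hF_slice a) (hF_slice a')]
      have hpoint (y : Fin n → 𝒳) : ‖F (a, y) - F (a', y)‖ ≤ c 0 := by
        simpa [F] using hbdd 0 (Fin.insertNth 0 a y) a'
      calc |∫ y, F (a, y) - F (a', y) ∂Measure.pi ν'|
          ≤ c 0 * (Measure.pi ν').real Set.univ :=
            norm_integral_le_of_norm_le_const (ae_of_all _ hpoint)
        _ = c 0 := by simp
    have hX : HasSubgaussianMGF (fun a => g a - ∫ a', g a' ∂ν 0) ((‖c 0‖₊ / 2) ^ 2) (ν 0) := by
      obtain ⟨b, hb⟩ := exists_forall_mem_Icc_of_abs_sub_le hg_osc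
      simpa using hasSubgaussianMGF_of_mem_Icc
        (hF.stronglyMeasurable.integral_prod_right').measurable.aemeasurable (ae_of_all _ hb)
    have hY (a : 𝒳) : HasSubgaussianMGF (fun y => F (a, y) - g a)
        (∑ j, (‖c (Fin.succAbove 0 j)‖₊ / 2) ^ 2) (Measure.pi ν') :=
      ih ν' (hF.comp measurable_prodMk_left) fun j y x' => by
        simpa [F, Fin.insertNth_update] using hbdd (Fin.succAbove 0 j) (Fin.insertNth 0 a y) x'
    have hXY := hX.add_prod (Y := fun p => F p - g p.1) hY fun t => by
      simp_rw [sub_add_sub_cancel']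
      exact integrable_exp_mul_of_mem_Icc (hF.sub_const _).aemeasurable
        (ae_of_all _ fun p => ⟨sub_le_sub_right (hm _).1 _, sub_le_sub_right (hm _).2 _⟩)
    have hsplit : (fun x => f x - ∫ y, f y ∂Measure.pi ν)
        = (fun p => g p.1 - ∫ a, g a ∂ν 0 + (F p - g p.1)) ∘ e := by
      ext x
      rw [Function.comp_apply, hFe, hmean]
      ring
    rw [Fin.sum_univ_succAbove _ 0, hsplit]
    exact .of_map he.measurable.aemeasurable (he.map_eq ▸ hXY)

theorem ProbabilityTheory.iIndepFun.hasSubgaussianMGF_of_hasBoundedDifferences {Ω 𝒳 : Type*}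
    [MeasurableSpace Ω] [MeasurableSpace 𝒳] {μ : Measure Ω} [IsProbabilityMeasure μ] {n : ℕ}
    {X : Fin n → Ω → 𝒳} (hX : ∀ i, Measurable (X i)) (hindep : iIndepFun X μ)
    {f : (Fin n → 𝒳) → ℝ} (hf : Measurable f) {c : Fin n → ℝ}
    (hbdd : HasBoundedDifferences f c) :
    HasSubgaussianMGF (fun ω => f (fun i => X i ω) - ∫ ω', f (fun i => X i ω') ∂μ)
      (∑ i, (‖c i‖₊ / 2) ^ 2) μ := by
  have hV : Measurable fun ω i => X i ω := measurable_pi_lambda _ hX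
  have (i : Fin n) : IsProbabilityMeasure (μ.map (X i)) :=
    Measure.isProbabilityMeasure_map (hX i).aemeasurable
  have h := hasSubgaussianMGF_pi_of_hasBoundedDifferences (fun i => μ.map (X i)) hf hbdd
  rw [← hindep.map_fun_eq_pi_map fun i => (hX i).aemeasurable,
    integral_map hV.aemeasurable hf.aestronglyMeasurable] at h
  exact h.of_map hV.aemeasurable

/-- McDiarmid's bounded differences inequality: if `X₁, …, X_n` are independent and
`f` has the bounded difference property with constants `c i`, then with
`Z = f(X₁,…,X_n)` and `ν = (1/4)∑ᵢ cᵢ²`, `P(Z − E[Z] > t) ≤ exp(−t²/(2ν))` for all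
`t > 0`. -/
theorem bounded_differences_inequality
    {Ω : Type*} [MeasurableSpace Ω]
    {𝒳 : Type*} [MeasurableSpace 𝒳]
    (μ : Measure Ω) [IsProbabilityMeasure μ]
    (n : ℕ) (X : Fin n → Ω → 𝒳) (hXmeas : ∀ i, Measurable (X i))
    (hXindep : iIndepFun X μ)
    (f : (Fin n → 𝒳) → ℝ) (hf : Measurable f)
    (c : Fin n → ℝ)
    (hbdd : ∀ (i : Fin n) (x : Fin n → 𝒳) (x' : 𝒳),
      |f x - f (Function.update x i x')| ≤ c i) :
    ∀ t : ℝ, 0 < t →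
      (μ {ω | f (fun i => X i ω) - ∫ ω', f (fun i => X i ω') ∂μ > t}).toReal
        ≤ Real.exp (-(t^2) / (2 * ((1/4) * ∑ i, (c i)^2))) := by
  intro t ht
  have hvar : ((∑ i, (‖c i‖₊ / 2) ^ 2 : ℝ≥0) : ℝ) = (1/4) * ∑ i, (c i)^2 := by
    push_cast
    rw [Finset.mul_sum]
    exact Finset.sum_congr rfl fun i _ => by rw [Real.norm_eq_abs, div_pow, sq_abs]; ring
  calc (μ {ω | f (fun i => X i ω) - ∫ ω', f (fun i => X i ω') ∂μ > t}).toReal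
      ≤ μ.real {ω | t ≤ f (fun i => X i ω) - ∫ ω', f (fun i => X i ω') ∂μ} :=
        measureReal_mono fun ω (hω : _ > t) => hω.le
    _ ≤ _ := by
        rw [← hvar]
        exact (hXindep.hasSubgaussianMGF_of_hasBoundedDifferences hXmeas hf hbdd).measure_ge_le
          ht.le
end
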